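/- Existence of an optimal power-control solution: let J be a nonempty finite set of broadcast blocks with channel gains H_j > 0 and let Q, B, N_0, E > 0. The problem of minimizing Σ_{j∈J} T_j over reals T_j > 0, p_j > 0 subject to Q ≤ T_j·B·log₂(1 + p_jH_j/N_0) for each j ∈ J and Σ_{j∈J} T_j·p_j ≤ E admits an optimal (minimizing) solution if and only if E > (Q·N_0·ln 2/B)·Σ_{j∈J} 1/H_j. -/

import Mathlib

lemma aux_exp_sub_one_ge (y : ℝ) (hy : 0 ≤ y) : y ^ 2 / 4 ≤ Real.exp y - 1 := by
  have h1 : 1 + y / 2 ≤ Real.exp (y / 2) := by linarith [Real.add_one_le_exp (y / 2)]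
  have h2 : Real.exp y = Real.exp (y / 2) * Real.exp (y / 2) := by
    rw [← Real.exp_add]; ring_nf
  nlinarith [Real.exp_pos (y / 2)]

noncomputable def pcG (N0 c h t : ℝ) : ℝ := N0 / h * (t * (Real.exp (c / t) - 1))

lemma aux_exp_sub_one_gt (y : ℝ) (hy : 0 < y) : y < Real.exp y - 1 := by
  have := Real.add_one_lt_exp (ne_of_gt hy)
  linarith

lemma pcG_gt (N0 c h t : ℝ) (hN0 : 0 < N0) (hc : 0 < c) (hh : 0 < h) (ht : 0 < t) :
    N0 / h * c < pcG N0 c h t := by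
  unfold pcG
  have h1 : 0 < c / t := div_pos hc ht
  have h2 := aux_exp_sub_one_gt (c / t) h1
  have h3 : t * (c / t) = c := by field_simp
  have h4 : c < t * (Real.exp (c / t) - 1) := by
    calc c = t * (c / t) := h3.symm
    _ < t * (Real.exp (c / t) - 1) := mul_lt_mul_of_pos_left h2 ht
  exact mul_lt_mul_of_pos_left h4 (div_pos hN0 hh)

/-- Any feasible pair (t, p) uses at least energy `pcG N0 c h t`. -/
lemma pcG_le_energy (Q B N0 h t p : ℝ) (hQ : 0 < Q) (hB : 0 < B) (hN0 : 0 < N0)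
    (hh : 0 < h) (ht : 0 < t) (hp : 0 < p)
    (hcon : Q ≤ t * (B * Real.logb 2 (1 + p * h / N0))) :
    pcG N0 (Q * Real.log 2 / B) h t ≤ t * p := by
  have hlog2 : (0:ℝ) < Real.log 2 := Real.log_pos one_lt_two
  set c : ℝ := Q * Real.log 2 / B with hc_def
  set x : ℝ := p * h / N0 with hx_def
  have hx0 : 0 < x := by positivity
  have key : Q * Real.log 2 ≤ t * B * Real.log (1 + x) := by
    rw [Real.logb] at hcon
    calc Q * Real.log 2 ≤ (t * (B * (Real.log (1 + x) / Real.log 2))) * Real.log 2 :=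
          mul_le_mul_of_nonneg_right hcon hlog2.le
    _ = t * B * Real.log (1 + x) := by field_simp
  have h1 : c / t ≤ Real.log (1 + x) := by
    rw [hc_def, div_le_iff₀ ht, div_le_iff₀ hB]
    nlinarith [key]
  have h2 : Real.exp (c / t) ≤ 1 + x := by
    calc Real.exp (c / t) ≤ Real.exp (Real.log (1 + x)) := Real.exp_le_exp.2 h1
    _ = 1 + x := Real.exp_log (by positivity)
  have h3 : t * (Real.exp (c / t) - 1) ≤ t * x := by nlinarith
  calc pcG N0 c h t = N0 / h * (t * (Real.exp (c / t) - 1)) := rfl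
  _ ≤ N0 / h * (t * x) := mul_le_mul_of_nonneg_left h3 (by positivity)
  _ = t * p := by rw [hx_def]; field_simp

/-- Energy bound forces a latency lower bound. -/
lemma pcG_time_lb (N0 c h t E : ℝ) (hN0 : 0 < N0) (hc : 0 < c) (hh : 0 < h)
    (ht : 0 < t) (hE : 0 < E) (hg : pcG N0 c h t ≤ E) :
    N0 * c ^ 2 / (4 * E * h) ≤ t := by
  have hq2 : c ^ 2 / 4 ≤ (Real.exp (c / t) - 1) * t ^ 2 := by
    have h0 := aux_exp_sub_one_ge (c / t) (by positivity)
    have : (c / t) ^ 2 / 4 * t ^ 2 ≤ (Real.exp (c / t) - 1) * t ^ 2 :=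
      mul_le_mul_of_nonneg_right h0 (sq_nonneg t)
    calc c ^ 2 / 4 = (c / t) ^ 2 / 4 * t ^ 2 := by field_simp
    _ ≤ _ := this
  have hg' : N0 * (t * (Real.exp (c / t) - 1)) ≤ E * h := by
    have := mul_le_mul_of_nonneg_right hg hh.le
    unfold pcG at this
    calc N0 * (t * (Real.exp (c / t) - 1)) = N0 / h * (t * (Real.exp (c / t) - 1)) * h := by
          field_simp
    _ ≤ E * h := this
  rw [div_le_iff₀ (by positivity)]
  nlinarith [mul_le_mul_of_nonneg_left hq2 hN0.le, mul_le_mul_of_nonneg_right hg' ht.le]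

/-- Upper bound on `pcG` for large `t`. -/
lemma pcG_time_ub (N0 c h t : ℝ) (hN0 : 0 < N0) (hc : 0 < c) (hh : 0 < h)
    (hct : c < t) :
    pcG N0 c h t ≤ N0 / h * c + N0 / h * (c ^ 2 / (t - c)) := by
  have ht : 0 < t := hc.trans hct
  have hy0 : 0 ≤ c / t := by positivity
  have hy1 : c / t < 1 := (div_lt_one ht).2 hct
  have hle : Real.exp (c / t) - 1 ≤ (c / t) / (1 - c / t) := by
    have h1 : 1 - c / t ≤ Real.exp (-(c / t)) := by linarith [Real.add_one_le_exp (-(c / t))]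
    have h2 : (1 - c / t) * Real.exp (c / t) ≤ 1 := by
      have := mul_le_mul_of_nonneg_right h1 (Real.exp_pos (c / t)).le
      rwa [← Real.exp_add, neg_add_cancel, Real.exp_zero] at this
    rw [le_div_iff₀ (by linarith)]
    nlinarith
  have heq : t * ((c / t) / (1 - c / t)) = c + c ^ 2 / (t - c) := by
    have h1 : t ≠ 0 := ne_of_gt ht
    have h2 : t - c ≠ 0 := ne_of_gt (by linarith)
    field_simp
    ring
  calc pcG N0 c h t = N0 / h * (t * (Real.exp (c / t) - 1)) := rfl
  _ ≤ N0 / h * (t * ((c / t) / (1 - c / t))) := by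
      apply mul_le_mul_of_nonneg_left _ (by positivity)
      exact mul_le_mul_of_nonneg_left hle ht.le
  _ = N0 / h * c + N0 / h * (c ^ 2 / (t - c)) := by rw [heq]; ring

/-- With the minimal power choice, the rate constraint holds with equality. -/
lemma pc_rate_eq (Q B N0 h t : ℝ) (hQ : 0 < Q) (hB : 0 < B) (hN0 : 0 < N0)
    (hh : 0 < h) (ht : 0 < t) :
    t * (B * Real.logb 2
      (1 + (N0 / h * (Real.exp ((Q * Real.log 2 / B) / t) - 1)) * h / N0)) = Q := by
  have hlog2 : (0:ℝ) < Real.log 2 := Real.log_pos one_lt_two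
  have h1 : 1 + (N0 / h * (Real.exp ((Q * Real.log 2 / B) / t) - 1)) * h / N0
      = Real.exp ((Q * Real.log 2 / B) / t) := by field_simp; ring
  rw [h1, Real.logb, Real.log_exp]
  field_simp

lemma pcG_pos (N0 c h t : ℝ) (hN0 : 0 < N0) (hc : 0 < c) (hh : 0 < h) (ht : 0 < t) :
    0 < pcG N0 c h t := by
  unfold pcG
  have h1 : 0 < c / t := div_pos hc ht
  have h2 : 1 + c / t ≤ Real.exp (c / t) := by linarith [Real.add_one_le_exp (c / t)]
  have : 0 < Real.exp (c / t) - 1 := by linarith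
  positivity

/-- Feasibility for the broadcast power-control problem (P3.1) restricted to the
block set `J`: all latencies and powers are positive, every block is delivered,
and the total energy budget is respected. -/
def PCFeasible {ι : Type*} (J : Finset ι) (H : ι → ℝ) (Q B N0 E : ℝ)
    (T p : ι → ℝ) : Prop :=
  (∀ j ∈ J, 0 < T j) ∧ (∀ j ∈ J, 0 < p j) ∧
  (∀ j ∈ J, Q ≤ T j * (B * Real.logb 2 (1 + p j * H j / N0))) ∧
  ∑ j ∈ J, T j * p j ≤ E

/-- **Existence of an optimal power-control solution.**
Let `J` be a nonempty finite set of broadcast blocks with channel gains `H j > 0`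
and let `Q, B, N0, E > 0`.  The problem of minimizing `Σ_{j∈J} T j` over reals
`T j > 0`, `p j > 0` subject to `Q ≤ T j * B * log₂(1 + p j * H j / N0)` for each
`j ∈ J` and `Σ_{j∈J} T j * p j ≤ E` admits an optimal (minimizing) solution if and
only if `E > (Q * N0 * ln 2 / B) * Σ_{j∈J} 1 / H j`. -/
theorem optimal_power_control_exists_iff {ι : Type*} (J : Finset ι) (hJ : J.Nonempty)
    (H : ι → ℝ) (hH : ∀ j ∈ J, 0 < H j)
    (Q B N0 E : ℝ) (hQ : 0 < Q) (hB : 0 < B) (hN0 : 0 < N0) (hE : 0 < E) :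
    (∃ T p : ι → ℝ, PCFeasible J H Q B N0 E T p ∧
        ∀ T' p' : ι → ℝ, PCFeasible J H Q B N0 E T' p' →
          ∑ j ∈ J, T j ≤ ∑ j ∈ J, T' j) ↔
    (Q * N0 * Real.log 2 / B) * ∑ j ∈ J, 1 / H j < E := by
  classical
  have hlog2 : (0:ℝ) < Real.log 2 := Real.log_pos one_lt_two
  set c : ℝ := Q * Real.log 2 / B with hc_def
  have hc : 0 < c := by rw [hc_def]; positivity
  have hRHS : (Q * N0 * Real.log 2 / B) * ∑ j ∈ J, 1 / H j = ∑ j ∈ J, N0 / H j * c := by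
    rw [Finset.mul_sum]
    refine Finset.sum_congr rfl fun j hj => ?_
    have hHj : H j ≠ 0 := ne_of_gt (hH j hj)
    rw [hc_def]; field_simp
  rw [hRHS]
  constructor
  · rintro ⟨T, p, ⟨hTpos, hppos, hcon, hen⟩, -⟩
    have hlt : ∑ j ∈ J, N0 / H j * c < ∑ j ∈ J, T j * p j := by
      refine Finset.sum_lt_sum_of_nonempty hJ fun j hj => ?_
      exact lt_of_lt_of_le (pcG_gt N0 c (H j) (T j) hN0 hc (hH j hj) (hTpos j hj))
        (pcG_le_energy Q B N0 (H j) (T j) (p j) hQ hB hN0 (hH j hj) (hTpos j hj)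
          (hppos j hj) (hcon j hj))
    linarith
  · intro hlt
    have hM : 0 < ∑ j ∈ J, N0 / H j :=
      Finset.sum_pos (fun j hj => div_pos hN0 (hH j hj)) hJ
    set ε : ℝ := E - ∑ j ∈ J, N0 / H j * c with hε_def
    have hε : 0 < ε := by rw [hε_def]; linarith
    set t0 : ℝ := c + (∑ j ∈ J, N0 / H j) * c ^ 2 / ε + 1 with ht0_def
    have hct0 : c < t0 := by
      rw [ht0_def]
      have : 0 ≤ (∑ j ∈ J, N0 / H j) * c ^ 2 / ε := by positivity
      linarith
    have ht0 : 0 < t0 := hc.trans hct0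
    have hsum0 : ∑ j ∈ J, pcG N0 c (H j) t0 ≤ E := by
      have hb : ∀ j ∈ J, pcG N0 c (H j) t0 ≤ N0 / H j * c + N0 / H j * (c ^ 2 / (t0 - c)) :=
        fun j hj => pcG_time_ub N0 c (H j) t0 hN0 hc (hH j hj) hct0
      have h3 : 0 < t0 - c := by linarith
      have h2 : (∑ j ∈ J, N0 / H j) * (c ^ 2 / (t0 - c)) ≤ ε := by
        rw [← mul_div_assoc, div_le_iff₀ h3]
        have h4 : ε * (t0 - c) = (∑ j ∈ J, N0 / H j) * c ^ 2 + ε := by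
          rw [ht0_def]
          field_simp
          ring
        linarith
      calc ∑ j ∈ J, pcG N0 c (H j) t0
          ≤ ∑ j ∈ J, (N0 / H j * c + N0 / H j * (c ^ 2 / (t0 - c))) := Finset.sum_le_sum hb
      _ = (∑ j ∈ J, N0 / H j * c) + ∑ j ∈ J, N0 / H j * (c ^ 2 / (t0 - c)) :=
          Finset.sum_add_distrib
      _ ≤ (∑ j ∈ J, N0 / H j * c) + ε := by
          have hMd : (∑ j ∈ J, N0 / H j) * (c ^ 2 / (t0 - c))
              = ∑ j ∈ J, N0 / H j * (c ^ 2 / (t0 - c)) := Finset.sum_mul _ _ _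
          linarith
      _ = E := by rw [hε_def]; ring
    set δ : ι → ℝ := fun j => N0 * c ^ 2 / (4 * E * H j) with hδ_def
    have hδpos : ∀ j ∈ J, 0 < δ j := by
      intro j hj
      have := hH j hj
      rw [hδ_def]
      positivity
    have hδle : ∀ j ∈ J, ∀ t : ℝ, 0 < t → pcG N0 c (H j) t ≤ E → δ j ≤ t := by
      intro j hj t ht hg
      rw [hδ_def]
      exact pcG_time_lb N0 c (H j) t E hN0 hc (hH j hj) ht hE hg
    haveI : Nonempty ↥J := ⟨⟨hJ.choose, hJ.choose_spec⟩⟩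
    set S0 : ℝ := ∑ _j : ↥J, t0 with hS0_def
    set K : Set (↥J → ℝ) :=
      {x | (∀ j : ↥J, δ j.1 ≤ x j) ∧ (∑ j : ↥J, x j ≤ S0) ∧
        ∑ j : ↥J, pcG N0 c (H j.1) (x j) ≤ E} with hK_def
    have hconv : ∀ f : ι → ℝ, ∑ j : ↥J, f j.1 = ∑ j ∈ J, f j := by
      intro f
      rw [Finset.univ_eq_attach, Finset.sum_attach]
    have hx0K : (fun _ : ↥J => t0) ∈ K := by
      refine ⟨fun j => ?_, le_of_eq rfl, ?_⟩
      · apply hδle j.1 j.2 t0 ht0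
        refine le_trans (Finset.single_le_sum (f := fun k => pcG N0 c (H k) t0)
          (fun k hk => (pcG_pos N0 c (H k) t0 hN0 hc (hH k hk) ht0).le) j.2) hsum0
      · rw [hconv (fun j => pcG N0 c (H j) t0)]
        exact hsum0
    have hCclosed : IsClosed {x : ↥J → ℝ | ∀ j : ↥J, δ j.1 ≤ x j} := by
      have heq : {x : ↥J → ℝ | ∀ j : ↥J, δ j.1 ≤ x j}
          = ⋂ j : ↥J, {x : ↥J → ℝ | δ j.1 ≤ x j} := by
        ext x; simp [Set.mem_iInter]
      rw [heq]
      exact isClosed_iInter fun j => isClosed_le continuous_const (continuous_apply j)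
    have hgcont : ContinuousOn (fun x : ↥J → ℝ => ∑ j : ↥J, pcG N0 c (H j.1) (x j))
        {x : ↥J → ℝ | ∀ j : ↥J, δ j.1 ≤ x j} := by
      apply continuousOn_finset_sum
      intro j _
      have hne : ∀ x ∈ {x : ↥J → ℝ | ∀ j : ↥J, δ j.1 ≤ x j}, x j ≠ 0 := fun x hx =>
        ne_of_gt (lt_of_lt_of_le (hδpos j.1 j.2) (hx j))
      simp only [pcG]
      exact continuousOn_const.mul (((continuous_apply j).continuousOn).mul
        (((continuousOn_const.div (continuous_apply j).continuousOn hne).rexp).sub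
          continuousOn_const))
    have hsumcont : Continuous (fun x : ↥J → ℝ => ∑ j : ↥J, x j) :=
      continuous_finset_sum _ fun j _ => continuous_apply j
    have hKclosed : IsClosed K := by
      have hs : IsClosed ({x : ↥J → ℝ | ∀ j : ↥J, δ j.1 ≤ x j}
          ∩ {x : ↥J → ℝ | ∑ j : ↥J, x j ≤ S0}) :=
        hCclosed.inter (isClosed_le hsumcont continuous_const)
      have hKeq : K = ({x : ↥J → ℝ | ∀ j : ↥J, δ j.1 ≤ x j}
          ∩ {x : ↥J → ℝ | ∑ j : ↥J, x j ≤ S0}) ∩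
          (fun x : ↥J → ℝ => ∑ j : ↥J, pcG N0 c (H j.1) (x j)) ⁻¹' Set.Iic E := by
        ext x
        constructor
        · rintro ⟨h1, h2, h3⟩; exact ⟨⟨h1, h2⟩, h3⟩
        · rintro ⟨⟨h1, h2⟩, h3⟩; exact ⟨h1, h2, h3⟩
      rw [hKeq]
      exact (hgcont.mono Set.inter_subset_left).preimage_isClosed_of_isClosed hs isClosed_Iic
    have hKsub : K ⊆ Set.pi Set.univ (fun j : ↥J => Set.Icc (δ j.1) S0) := by
      intro x hx
      rw [Set.mem_univ_pi]
      intro j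
      refine ⟨hx.1 j, ?_⟩
      exact le_trans (Finset.single_le_sum
        (fun k _ => (hδpos k.1 k.2).le.trans (hx.1 k)) (Finset.mem_univ j)) hx.2.1
    have hKcompact : IsCompact K :=
      (isCompact_univ_pi fun j => isCompact_Icc).of_isClosed_subset hKclosed hKsub
    obtain ⟨xs, hxsK, hxsmin⟩ := hKcompact.exists_isMinOn ⟨_, hx0K⟩ hsumcont.continuousOn
    set Ts : ι → ℝ := fun j => if h : j ∈ J then xs ⟨j, h⟩ else 1 with hTs_def
    set ps : ι → ℝ := fun j => N0 / H j * (Real.exp (c / Ts j) - 1) with hps_def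
    have hTsJ : ∀ (j) (hj : j ∈ J), Ts j = xs ⟨j, hj⟩ := fun j hj => dif_pos hj
    have hTspos : ∀ j ∈ J, 0 < Ts j := by
      intro j hj
      rw [hTsJ j hj]
      exact lt_of_lt_of_le (hδpos j hj) (hxsK.1 ⟨j, hj⟩)
    have hpspos : ∀ j ∈ J, 0 < ps j := by
      intro j hj
      have h1 : 0 < c / Ts j := div_pos hc (hTspos j hj)
      have h2 := aux_exp_sub_one_gt (c / Ts j) h1
      have : 0 < Real.exp (c / Ts j) - 1 := by linarith
      rw [hps_def]
      exact mul_pos (div_pos hN0 (hH j hj)) this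
    have hTp_g : ∀ j ∈ J, Ts j * ps j = pcG N0 c (H j) (Ts j) := by
      intro j hj
      simp only [hps_def, pcG]
      ring
    have hmemK : ∀ T' p' : ι → ℝ, PCFeasible J H Q B N0 E T' p' →
        (∀ j : ↥J, δ j.1 ≤ T' j.1) ∧ ∑ j : ↥J, pcG N0 c (H j.1) (T' j.1) ≤ E := by
      rintro T' p' ⟨hT', hp', hcon', hen'⟩
      have hg' : ∀ j ∈ J, pcG N0 c (H j) (T' j) ≤ T' j * p' j := fun j hj =>
        pcG_le_energy Q B N0 (H j) (T' j) (p' j) hQ hB hN0 (hH j hj) (hT' j hj)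
          (hp' j hj) (hcon' j hj)
      have hsg : ∑ j ∈ J, pcG N0 c (H j) (T' j) ≤ E :=
        le_trans (Finset.sum_le_sum hg') hen'
      constructor
      · intro j
        apply hδle j.1 j.2 (T' j.1) (hT' j.1 j.2)
        refine le_trans (Finset.single_le_sum (f := fun k => pcG N0 c (H k) (T' k))
          (fun k hk => (pcG_pos N0 c (H k) (T' k) hN0 hc (hH k hk) (hT' k hk)).le) j.2) hsg
      · rw [hconv (fun j => pcG N0 c (H j) (T' j))]
        exact hsg
    have hfeas : PCFeasible J H Q B N0 E Ts ps := by
      refine ⟨hTspos, hpspos, ?_, ?_⟩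
      · intro j hj
        have heq := pc_rate_eq Q B N0 (H j) (Ts j) hQ hB hN0 (hH j hj) (hTspos j hj)
        rw [hps_def]
        simp only
        rw [← hc_def] at heq
        exact le_of_eq heq.symm
      · have h1 : ∑ j ∈ J, Ts j * ps j = ∑ j ∈ J, pcG N0 c (H j) (Ts j) :=
          Finset.sum_congr rfl hTp_g
        have h2 : ∑ j ∈ J, pcG N0 c (H j) (Ts j) = ∑ j : ↥J, pcG N0 c (H j.1) (xs j) := by
          rw [Finset.univ_eq_attach, ← Finset.sum_attach J (fun j => pcG N0 c (H j) (Ts j))]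
          exact Finset.sum_congr rfl fun j _ => by rw [hTsJ j.1 j.2]
        rw [h1, h2]
        exact hxsK.2.2
    refine ⟨Ts, ps, hfeas, ?_⟩
    intro T' p' hfeas'
    have hTs_sum : ∑ j ∈ J, Ts j = ∑ j : ↥J, xs j := by
      rw [Finset.univ_eq_attach, ← Finset.sum_attach J Ts]
      exact Finset.sum_congr rfl fun j _ => by rw [hTsJ j.1 j.2]
    have hT'_sum : ∑ j ∈ J, T' j = ∑ j : ↥J, T' j.1 := (hconv T').symm
    obtain ⟨hd, hg⟩ := hmemK T' p' hfeas'
    by_cases hcase : ∑ j : ↥J, T' j.1 ≤ S0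
    · have hx'K : (fun j : ↥J => T' j.1) ∈ K := ⟨hd, hcase, hg⟩
      have hmin := isMinOn_iff.mp hxsmin _ hx'K
      rw [hTs_sum, hT'_sum]
      exact hmin
    · push_neg at hcase
      have h1 : ∑ j : ↥J, xs j ≤ S0 := hxsK.2.1
      rw [hTs_sum, hT'_sum]
      linarith
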